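/- arXiv:2502.05306 — 2 statements merged into one kernel-verified Lean document; each statement's English description precedes it below -/
import Mathlib

section
/- In a dagger category, if d : A ⟶ A is a Drazin inverse of f ≫ f† for a map f : A ⟶ B, then f† ≫ d : B ⟶ A is a †-Drazin inverse of f. Dually, if e : B ⟶ B is a Drazin inverse of f† ≫ f, then e ≫ f† : B ⟶ A is a †-Drazin inverse of f (so the †-Drazin inverse of f equals both f† ≫ (f ≫ f†)ᴰ and (f† ≫ f)ᴰ ≫ f†). -/
open CategoryTheory

universe v u

/-- A dagger on a category: an identity-on-objects contravariant involution. -/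
structure Dagger (C : Type u) [Category.{v} C] where
  dag : ∀ {X Y : C}, (X ⟶ Y) → (Y ⟶ X)
  dag_id : ∀ X : C, dag (𝟙 X) = 𝟙 X
  dag_comp : ∀ {X Y Z : C} (f : X ⟶ Y) (g : Y ⟶ Z), dag (f ≫ g) = dag g ≫ dag f
  dag_dag : ∀ {X Y : C} (f : X ⟶ Y), dag (dag f) = f

/-- Iterated composition power of an endomorphism, with `cpow x 0 = 𝟙 A`. -/
def cpow {C : Type u} [Category.{v} C] {A : C} (x : A ⟶ A) : ℕ → (A ⟶ A)
  | 0 => 𝟙 A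
  | n + 1 => cpow x n ≫ x

/-- `p` is a †-Drazin inverse of `f`. -/
def IsDagDrazinInv {C : Type u} [Category.{v} C] (D : Dagger C)
    {A B : C} (f : A ⟶ B) (p : B ⟶ A) : Prop :=
  (∃ k : ℕ, cpow (f ≫ D.dag f) k ≫ f ≫ p = cpow (f ≫ D.dag f) k ∧
    p ≫ f ≫ cpow (D.dag f ≫ f) k = cpow (D.dag f ≫ f) k) ∧
  p ≫ f ≫ p = p ∧
  D.dag (f ≫ p) = f ≫ p ∧
  D.dag (p ≫ f) = p ≫ f

/-- `d` is a Drazin inverse of the endomorphism `x`. -/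
def IsDrazinInv {C : Type u} [Category.{v} C] {A : C} (x d : A ⟶ A) : Prop :=
  (∃ k : ℕ, cpow x (k + 1) ≫ d = cpow x k) ∧
  d ≫ x ≫ d = d ∧
  x ≫ d = d ≫ x

/-!
Since `f ≫ f†` is self-adjoint, the dagger of a Drazin inverse `d` of it is again one, so `d` is
self-adjoint by uniqueness of Drazin inverses. The †-Drazin axioms for `f† ≫ d` then follow by
moving `f` across powers, `f ≫ (f† ≫ f)ⁿ = (f ≫ f†)ⁿ ≫ f`. The dagger sends †-Drazin inverses of
`f` to those of `f†`, so the second half is the first one applied to `f†`.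
-/

section Monoid

variable {M : Type*} [Monoid M] {x d d' : M} {k k' n : ℕ}

theorem mul_pow_succ_eq_pow_of_le (h : d * x ^ (k + 1) = x ^ k) (hkn : k ≤ n) :
    d * x ^ (n + 1) = x ^ n := by
  obtain ⟨m, rfl⟩ := Nat.exists_eq_add_of_le hkn
  rw [add_right_comm, pow_add, ← mul_assoc, h, pow_add]

theorem pow_mul_pow_succ_eq_self (hc : Commute d x) (hdxd : d * x * d = d) :
    ∀ m : ℕ, x ^ m * d ^ (m + 1) = d
  | 0 => by simp
  | m + 1 => by
    calc x ^ (m + 1) * d ^ (m + 1 + 1)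
        = x ^ m * (x * d ^ (m + 1)) * d := by rw [pow_succ x, pow_succ d]; simp only [mul_assoc]
      _ = x ^ m * d ^ (m + 1) * x * d := by rw [← (hc.pow_left (m + 1)).eq]; simp only [mul_assoc]
      _ = d := by rw [pow_mul_pow_succ_eq_self hc hdxd m, hdxd]

theorem drazin_inverse_unique (hk : d * x ^ (k + 1) = x ^ k) (hdxd : d * x * d = d)
    (hc : Commute d x) (hk' : d' * x ^ (k' + 1) = x ^ k') (hdxd' : d' * x * d' = d')
    (hc' : Commute d' x) : d = d' := by
  set n := max k k'
  have hn : d * x ^ (n + 1) = x ^ n := mul_pow_succ_eq_pow_of_le hk (le_max_left _ _)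
  have hn' : d' * x ^ (n + 1) = x ^ n := mul_pow_succ_eq_pow_of_le hk' (le_max_right _ _)
  have hidem : IsIdempotentElem (x * d) := by
    rw [IsIdempotentElem, mul_assoc, ← mul_assoc d, hdxd]
  have hidem' : IsIdempotentElem (d' * x) := by
    rw [IsIdempotentElem, ← mul_assoc, hdxd']
  -- Both `d` and `d'` equal `d' * x * d`.
  have hd : d = d' * x * d :=
    calc d = x ^ n * d ^ (n + 1) := (pow_mul_pow_succ_eq_self hc hdxd n).symm
      _ = d' * (x * d) ^ (n + 1) := by rw [← hn', hc.symm.mul_pow, mul_assoc]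
      _ = d' * x * d := by rw [hidem.pow_succ_eq, mul_assoc]
  have hd' : d' = d' * x * d :=
    calc d' = d' ^ (n + 1) * x ^ n := by
          rw [(hc'.pow_pow (n + 1) n).eq,
            pow_mul_pow_succ_eq_self hc' hdxd' n]
      _ = (d' * x) ^ (n + 1) * d := by
          rw [← hn, (hc.pow_right (n + 1)).eq, hc'.mul_pow, mul_assoc]
      _ = d' * x * d := by rw [hidem'.pow_succ_eq]
  rw [hd, ← hd']

end Monoid

section Category

variable {C : Type u} [Category.{v} C] {A B : C}

theorem cpow_eq_pow (x : A ⟶ A) : ∀ n : ℕ, cpow x n = End.of x ^ n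
  | 0 => rfl
  | n + 1 => by rw [pow_succ', cpow, cpow_eq_pow x n]; rfl

theorem cpow_succ (x : A ⟶ A) (n : ℕ) : cpow x (n + 1) = cpow x n ≫ x := rfl

theorem cpow_succ' (x : A ⟶ A) (n : ℕ) : cpow x (n + 1) = x ≫ cpow x n := by
  rw [cpow_eq_pow, cpow_eq_pow, pow_succ]; rfl

theorem cpow_comp_comm {x d : A ⟶ A} (hc : x ≫ d = d ≫ x) (n : ℕ) :
    cpow x n ≫ d = d ≫ cpow x n := by
  rw [cpow_eq_pow]
  exact (Commute.pow_right (show Commute (End.of d) (End.of x) from hc) n).eq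

theorem comp_cpow_comp (f : A ⟶ B) (g : B ⟶ A) :
    ∀ n : ℕ, f ≫ cpow (g ≫ f) n = cpow (f ≫ g) n ≫ f
  | 0 => by simp [cpow]
  | n + 1 => by simp only [cpow, ← Category.assoc, comp_cpow_comp f g n]

theorem IsDrazinInv.unique {x d d' : A ⟶ A} (hd : IsDrazinInv x d) (hd' : IsDrazinInv x d') :
    d = d' := by
  obtain ⟨⟨k, hk⟩, hdxd, hc⟩ := hd
  obtain ⟨⟨k', hk'⟩, hdxd', hc'⟩ := hd'
  rw [cpow_eq_pow, cpow_eq_pow] at hk hk'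
  exact drazin_inverse_unique (M := End A) hk hdxd hc hk' hdxd' hc'

namespace Dagger

variable (D : Dagger C)

theorem dag_cpow {x : A ⟶ A} (hx : D.dag x = x) : ∀ n : ℕ, D.dag (cpow x n) = cpow x n
  | 0 => D.dag_id A
  | n + 1 => by rw [cpow, D.dag_comp, hx, dag_cpow hx n, ← cpow_succ']; rfl

theorem dag_comp_dag_self (f : A ⟶ B) : D.dag (f ≫ D.dag f) = f ≫ D.dag f := by
  rw [D.dag_comp, D.dag_dag]

theorem dag_dag_comp_self (f : A ⟶ B) : D.dag (D.dag f ≫ f) = D.dag f ≫ f := by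
  rw [D.dag_comp, D.dag_dag]

end Dagger

theorem IsDrazinInv.dag (D : Dagger C) {x d : A ⟶ A} (hx : D.dag x = x)
    (hd : IsDrazinInv x d) : IsDrazinInv x (D.dag d) := by
  obtain ⟨⟨k, hk⟩, hdxd, hc⟩ := hd
  have hc' : x ≫ D.dag d = D.dag d ≫ x := by
    simpa only [D.dag_comp, hx] using (congrArg D.dag hc).symm
  refine ⟨⟨k, ?_⟩, ?_, hc'⟩
  · rw [cpow_comp_comm hc']
    simpa only [D.dag_comp, D.dag_cpow hx] using congrArg D.dag hk
  · simpa only [D.dag_comp, hx, Category.assoc] using congrArg D.dag hdxd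

theorem IsDrazinInv.dag_eq_self (D : Dagger C) {x d : A ⟶ A} (hx : D.dag x = x)
    (hd : IsDrazinInv x d) : D.dag d = d :=
  (hd.dag D hx).unique hd

theorem isDagDrazinInv_dag_comp (D : Dagger C) {f : A ⟶ B} {d : A ⟶ A}
    (hd : IsDrazinInv (f ≫ D.dag f) d) : IsDagDrazinInv D f (D.dag f ≫ d) := by
  have hself : D.dag d = d := hd.dag_eq_self D (D.dag_comp_dag_self f)
  obtain ⟨⟨k, hk⟩, hdxd, hc⟩ := hd
  refine ⟨⟨k + 1, ?_, ?_⟩, ?_, ?_, ?_⟩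
  · calc cpow (f ≫ D.dag f) (k + 1) ≫ f ≫ D.dag f ≫ d
        = cpow (f ≫ D.dag f) (k + 1 + 1) ≫ d := by
          rw [cpow_succ _ (k + 1)]; simp only [Category.assoc]
      _ = (f ≫ D.dag f) ≫ cpow (f ≫ D.dag f) (k + 1) ≫ d := by
          rw [cpow_succ', Category.assoc]
      _ = cpow (f ≫ D.dag f) (k + 1) := by rw [hk, ← cpow_succ']
  · calc (D.dag f ≫ d) ≫ f ≫ cpow (D.dag f ≫ f) (k + 1)
        = D.dag f ≫ (d ≫ cpow (f ≫ D.dag f) (k + 1)) ≫ f := by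
          rw [comp_cpow_comp]; simp only [Category.assoc]
      _ = (D.dag f ≫ cpow (f ≫ D.dag f) k) ≫ f := by
          rw [← cpow_comp_comm hc, hk, Category.assoc]
      _ = cpow (D.dag f ≫ f) (k + 1) := by
          rw [comp_cpow_comp, Category.assoc, cpow_succ]
  · simp only [Category.assoc] at hdxd ⊢
    rw [hdxd]
  · rw [D.dag_comp, D.dag_comp, D.dag_dag, hself, Category.assoc, ← hc, Category.assoc]
  · rw [D.dag_comp, D.dag_comp, D.dag_dag, hself, Category.assoc]

theorem IsDagDrazinInv.dag {D : Dagger C} {f : A ⟶ B} {p : B ⟶ A}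
    (h : IsDagDrazinInv D f p) : IsDagDrazinInv D (D.dag f) (D.dag p) := by
  obtain ⟨⟨k, hk, hk'⟩, hpfp, hfp, hpf⟩ := h
  simp only [IsDagDrazinInv, D.dag_dag]
  refine ⟨⟨k, ?_, ?_⟩, ?_, ?_, ?_⟩
  · simpa only [D.dag_comp, D.dag_cpow (D.dag_dag_comp_self f), Category.assoc]
      using congrArg D.dag hk'
  · simpa only [D.dag_comp, D.dag_cpow (D.dag_comp_dag_self f), Category.assoc]
      using congrArg D.dag hk
  · simpa only [D.dag_comp, Category.assoc] using congrArg D.dag hpfp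
  · rw [← D.dag_comp, D.dag_dag, hpf]
  · rw [← D.dag_comp, D.dag_dag, hfp]

end Category

/-- A Drazin inverse of `f ≫ f†` (resp. `f† ≫ f`) yields the †-Drazin inverse of `f` as
`f† ≫ (f ≫ f†)ᴰ` (resp. `(f† ≫ f)ᴰ ≫ f†`). -/
theorem dagDrazinInv_of_drazinInv {C : Type u} [Category.{v} C] (D : Dagger C)
    {A B : C} (f : A ⟶ B) :
    (∀ d : A ⟶ A, IsDrazinInv (f ≫ D.dag f) d → IsDagDrazinInv D f (D.dag f ≫ d)) ∧
    (∀ e : B ⟶ B, IsDrazinInv (D.dag f ≫ f) e → IsDagDrazinInv D f (e ≫ D.dag f)) := by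
  refine ⟨fun d hd => isDagDrazinInv_dag_comp D hd, fun e he => ?_⟩
  have he' : IsDrazinInv (D.dag f ≫ D.dag (D.dag f)) e := by rwa [D.dag_dag]
  have h := (isDagDrazinInv_dag_comp D he').dag
  rwa [D.dag_comp, D.dag_dag, he.dag_eq_self D (D.dag_dag_comp_self f)] at h
end

section
/- In a dagger category, if g : B ⟶ A is a Moore-Penrose inverse of f : A ⟶ B, then g is a †-Drazin inverse of f for which axiom [D†.1] holds with k = 1 (so g is the †-group inverse of f), and moreover f is a †-Drazin inverse of g. -/
open CategoryTheory

universe v u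

/-- `p` is a Moore-Penrose inverse of `f`. -/
def IsMPInv {C : Type u} [Category.{v} C] (D : Dagger C)
    {A B : C} (f : A ⟶ B) (p : B ⟶ A) : Prop :=
  f ≫ p ≫ f = f ∧
  p ≫ f ≫ p = p ∧
  D.dag (f ≫ p) = f ≫ p ∧
  D.dag (p ≫ f) = p ≫ f

section

variable {C : Type u} [Category.{v} C]

theorem cpow_one {A : C} (x : A ⟶ A) : cpow x 1 = x :=
  Category.id_comp x

namespace IsMPInv

variable {D : Dagger C} {A B : C} {f : A ⟶ B} {g : B ⟶ A}

theorem symm (h : IsMPInv D f g) : IsMPInv D g f :=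
  ⟨h.2.1, h.1, h.2.2.2, h.2.2.1⟩

/-- Daggering `f ≫ g ≫ f = f` and using that `f ≫ g` is self-adjoint. -/
theorem dag_comp_comp (h : IsMPInv D f g) : D.dag f ≫ f ≫ g = D.dag f := by
  conv_rhs => rw [← h.1, ← Category.assoc, D.dag_comp, h.2.2.1]

/-- Daggering `f ≫ g ≫ f = f` and using that `g ≫ f` is self-adjoint. -/
theorem comp_comp_dag (h : IsMPInv D f g) : g ≫ f ≫ D.dag f = D.dag f := by
  conv_rhs => rw [← h.1, D.dag_comp, h.2.2.2, Category.assoc]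

theorem comp_dag_comp_comp (h : IsMPInv D f g) : (f ≫ D.dag f) ≫ f ≫ g = f ≫ D.dag f := by
  rw [Category.assoc, h.dag_comp_comp]

theorem comp_comp_dag_comp (h : IsMPInv D f g) : g ≫ f ≫ (D.dag f ≫ f) = D.dag f ≫ f := by
  rw [← Category.assoc f, ← Category.assoc g, h.comp_comp_dag]

theorem isDagDrazinInv (h : IsMPInv D f g) : IsDagDrazinInv D f g :=
  ⟨⟨1, by simpa only [cpow_one] using h.comp_dag_comp_comp, by simpa only [cpow_one] using h.comp_comp_dag_comp⟩,
    h.2.1, h.2.2.1, h.2.2.2⟩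

end IsMPInv

end

/-- A Moore-Penrose inverse of `f` is the †-Drazin inverse of `f` with [D†.1] holding at
`k = 1` (i.e. the †-group inverse), and `f` is in turn the †-Drazin inverse of it. -/
theorem mpInv_dagDrazinInv {C : Type u} [Category.{v} C] (D : Dagger C)
    {A B : C} (f : A ⟶ B) (g : B ⟶ A) (h : IsMPInv D f g) :
    IsDagDrazinInv D f g ∧
    (f ≫ D.dag f) ≫ f ≫ g = f ≫ D.dag f ∧
    g ≫ f ≫ (D.dag f ≫ f) = D.dag f ≫ f ∧
    IsDagDrazinInv D g f :=
  ⟨h.isDagDrazinInv, h.comp_dag_comp_comp, h.comp_comp_dag_comp, h.symm.isDagDrazinInv⟩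
end
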